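/- arXiv:1807.02973 — 3 statements merged into one kernel-verified Lean document; each statement's English description precedes it below -/
import Mathlib

section
/- Let N = (P, T, Pre, Post, m₀) be a marked Petri net and let t, t' ∈ T with t ≠ t' be such that Δ(t) = Δ(t') (i.e., Post(t)(p) − Pre(t)(p) = Post(t')(p) − Pre(t')(p) for all p ∈ P, as integers) and Pre(t)(p) ≥ Pre(t')(p) for all p ∈ P (t is a duplicate of t'). Let N' = (P, T ∖ {t}, Pre, Post, m₀) be the net obtained from N by removing t. Then R(N) = R(N'). -/
/-! Marked Petri nets with places drawn from a type `X` and transitions drawn from a type `T`.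
Markings are total functions `X → ℕ`; a marking (valuation) "on a set of places `V`" is a
function that vanishes outside of `V`. -/

/-- The restriction of a valuation to a set `V` (zero outside `V`). -/
noncomputable def restrictTo {X : Type} (V : Set X) (f : X → ℕ) : X → ℕ :=
  V.indicator f

/-- Valuations on `V`: functions vanishing outside `V`. -/
def ValuationOn {X : Type} (V : Set X) : Set (X → ℕ) :=
  {f | ∀ x, x ∉ V → f x = 0}

/-- Lifting of a set `E` of valuations on `V` to a superset `U` of `V`:
the valuations on `U` whose restriction to `V` lies in `E`. -/
def liftTo {X : Type} (E : Set (X → ℕ)) (V U : Set X) : Set (X → ℕ) :=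
  {f | f ∈ ValuationOn U ∧ restrictTo V f ∈ E}

/-- Projection of a set `E` of valuations to a subset `U`: the restrictions to `U`
of the members of `E`. -/
def projTo {X : Type} (E : Set (X → ℕ)) (U : Set X) : Set (X → ℕ) :=
  (restrictTo U) '' E

/-- A marked Petri net `N = (P, T, Pre, Post, m₀)`. The set of places is `N.places ⊆ X`
and the set of transitions is `N.trans ⊆ T`. -/
structure PNet (X T : Type) where
  places : Set X
  trans : Set T
  Pre : T → X → ℕ
  Post : T → X → ℕ
  m0 : X → ℕ

namespace PNet

variable {X T : Type}

/-- Well-formedness: the sets of places and transitions are finite, and the initial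
marking as well as the pre/post-conditions of the transitions vanish outside the places. -/
def WF (N : PNet X T) : Prop :=
  N.places.Finite ∧ N.trans.Finite ∧
    (∀ x, x ∉ N.places → N.m0 x = 0) ∧
    (∀ t ∈ N.trans, ∀ x, x ∉ N.places → N.Pre t x = 0 ∧ N.Post t x = 0)

/-- A transition `t` is enabled at marking `m` if `m ≥ Pre(t)` pointwise. -/
def Enabled (N : PNet X T) (t : T) (m : X → ℕ) : Prop :=
  t ∈ N.trans ∧ ∀ x, N.Pre t x ≤ m x

/-- The marking obtained by firing `t` at `m` : `m - Pre(t) + Post(t)`. -/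
def fire (N : PNet X T) (t : T) (m : X → ℕ) : X → ℕ :=
  fun x => m x - N.Pre t x + N.Post t x

/-- One-step firing relation between markings. -/
def Step (N : PNet X T) (m m' : X → ℕ) : Prop :=
  ∃ t, N.Enabled t m ∧ m' = N.fire t m

/-- The reachability set (state space) `R(N)`: all markings reachable from `m₀`. -/
def R (N : PNet X T) : Set (X → ℕ) :=
  {m | Relation.ReflTransGen N.Step N.m0 m}

/-- `FireSeq N m σ m'` : the firing sequence `σ` can be fired from `m`, yielding `m'`. -/
def FireSeq (N : PNet X T) : (X → ℕ) → List T → (X → ℕ) → Prop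
  | m, [], m' => m' = m
  | m, t :: σ, m' => N.Enabled t m ∧ FireSeq N (N.fire t m) σ m'

/-- The sequence `σ` is firable from the marking `m`. -/
def Firable (N : PNet X T) (m : X → ℕ) (σ : List T) : Prop :=
  ∃ m', N.FireSeq m σ m'

/-- Displacement `Δ(t) = Post(t) - Pre(t) : P → ℤ` of a transition. -/
def delta (N : PNet X T) (t : T) : X → ℤ :=
  fun x => (N.Post t x : ℤ) - (N.Pre t x : ℤ)

/-- Displacement `Δ(σ)` of a firing sequence. -/
def deltaSeq (N : PNet X T) (σ : List T) : X → ℤ :=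
  fun x => (σ.map (fun t => N.delta t x)).sum

/-- `t` is a redundant transition witnessed by the sequence `σ`: `σ` avoids `t`,
has the same displacement as `t`, and is firable from the marking `Pre(t)`
(i.e. `H(t) ≥ H(σ)`). -/
def RedundantTransition (N : PNet X T) (t : T) (σ : List T) : Prop :=
  t ∈ N.trans ∧ (∀ u ∈ σ, u ∈ N.trans ∧ u ≠ t) ∧
    N.deltaSeq σ = N.delta t ∧ N.Firable (N.Pre t) σ

/-- The net obtained by removing transition `t`. -/
def removeTrans (N : PNet X T) (t : T) : PNet X T :=
  { N with trans := N.trans \ {t} }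

/-- `p` is a redundant place, witnessed by the set of places `I ⊆ P ∖ {p}`, the
valuation `v` (positive on `I ∪ {p}`) and the constant `b`. -/
def RedundantPlace (N : PNet X T) (p : X) (I : Finset X) (v : X → ℕ) (b : ℕ) : Prop :=
  p ∈ N.places ∧ ↑I ⊆ N.places \ {p} ∧ v p ≠ 0 ∧ (∀ q ∈ I, v q ≠ 0) ∧
    ((b : ℤ) = (v p : ℤ) * (N.m0 p : ℤ) - ∑ q ∈ I, (v q : ℤ) * (N.m0 q : ℤ)) ∧
    (∀ t ∈ N.trans,
      (v p : ℤ) * (N.Pre t p : ℤ) - ∑ q ∈ I, (v q : ℤ) * (N.Pre t q : ℤ) ≤ (b : ℤ)) ∧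
    (∀ t ∈ N.trans,
      (v p : ℤ) * ((N.Post t p : ℤ) - (N.Pre t p : ℤ))
        = ∑ q ∈ I, (v q : ℤ) * ((N.Post t q : ℤ) - (N.Pre t q : ℤ)))

/-- The net obtained by removing place `p` (restriction to `P ∖ {p}`). -/
noncomputable def removePlace (N : PNet X T) (p : X) : PNet X T where
  places := N.places \ {p}
  trans := N.trans
  Pre := fun t => restrictTo (N.places \ {p}) (N.Pre t)
  Post := fun t => restrictTo (N.places \ {p}) (N.Post t)
  m0 := restrictTo (N.places \ {p}) N.m0

/-- Place `a` is the sum of places `p` and `q`, written `a = p ⊞ q`. -/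
def IsSumPlace (N : PNet X T) (a p q : X) : Prop :=
  N.m0 a = N.m0 p + N.m0 q ∧
    ∀ t ∈ N.trans, N.Pre t a = N.Pre t p + N.Pre t q ∧ N.Post t a = N.Post t p + N.Post t q

/-- Places `p` and `q` are chain-agglomerable, witnessed by the transition `t`. -/
def ChainAgglomerable (N : PNet X T) (p q : X) (t : T) : Prop :=
  p ∈ N.places ∧ q ∈ N.places ∧ p ≠ q ∧ t ∈ N.trans ∧
    N.Pre t p = 1 ∧ (∀ r, r ≠ p → N.Pre t r = 0) ∧
    N.Post t q = 1 ∧ (∀ r, r ≠ q → N.Post t r = 0) ∧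
    (∀ t' ∈ N.trans, t' ≠ t → N.Post t' q = 0) ∧
    N.m0 q = 0

/-- Agglomeration of the set of places `A` as the fresh place `a`: the places become
`(P ∖ A) ∪ {a}`, the place `a` behaves as the sum of the places of `A`, and everything
else is unchanged. -/
noncomputable def agglom [DecidableEq X] (N : PNet X T) (A : Finset X) (a : X) : PNet X T where
  places := (N.places \ ↑A) ∪ {a}
  trans := N.trans
  Pre := fun u => Function.update (restrictTo (N.places \ ↑A) (N.Pre u)) a (∑ x ∈ A, N.Pre u x)
  Post := fun u => Function.update (restrictTo (N.places \ ↑A) (N.Post u)) a (∑ x ∈ A, N.Post u x)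
  m0 := Function.update (restrictTo (N.places \ ↑A) N.m0) a (∑ x ∈ A, N.m0 x)

/-- `(p, t)` is a source-sink pair. -/
def SourceSink (N : PNet X T) (p : X) (t : T) : Prop :=
  p ∈ N.places ∧ t ∈ N.trans ∧
    (∀ u ∈ N.trans, N.Post u p = 0) ∧
    (∀ u ∈ N.trans, u ≠ t → N.Pre u p = 0) ∧
    N.Pre t p = 1 ∧ (∀ r, r ≠ p → N.Pre t r = 0) ∧
    (∀ r, N.Post t r = 0)

/-- The net obtained by removing the source-sink pair `(p, t)`. -/
noncomputable def removeSourceSink (N : PNet X T) (p : X) (t : T) : PNet X T where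
  places := N.places \ {p}
  trans := N.trans \ {t}
  Pre := fun u => restrictTo (N.places \ {p}) (N.Pre u)
  Post := fun u => restrictTo (N.places \ {p}) (N.Post u)
  m0 := restrictTo (N.places \ {p}) N.m0

end PNet

/-- `(N₁, (W, S), N₂)` is a net-abstraction:
`R(N₁) = ((R(N₂) ↑ V) ∩ (S ↑ V)) ↓ P₁` where `V = W ∪ P₁ ∪ P₂`. -/
def NetAbstraction {X T₁ T₂ : Type} (N₁ : PNet X T₁) (W : Set X) (S : Set (X → ℕ))
    (N₂ : PNet X T₂) : Prop :=
  N₁.R = projTo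
    (liftTo N₂.R N₂.places (W ∪ N₁.places ∪ N₂.places) ∩
      liftTo S W (W ∪ N₁.places ∪ N₂.places))
    N₁.places

/- A transition `t` duplicating `t'` is never needed: wherever `t` is enabled, so is `t'`
(its precondition is smaller), and both produce the same marking since they have the same
displacement. Hence the firing relations of `N` and of `N` without `t` coincide. -/

namespace PNet

variable {X T : Type} {N : PNet X T} {t t' : T} {m m' : X → ℕ}

theorem cast_fire_of_pre_le (hm : ∀ x, N.Pre t x ≤ m x) (x : X) :
    (N.fire t m x : ℤ) = m x + N.delta t x := by
  simp only [fire, delta]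
  push_cast [hm x]
  ring

theorem fire_eq_of_delta_eq (hdelta : N.delta t = N.delta t')
    (hm : ∀ x, N.Pre t x ≤ m x) (hm' : ∀ x, N.Pre t' x ≤ m x) :
    N.fire t m = N.fire t' m := by
  funext x
  apply Nat.cast_injective (R := ℤ)
  rw [cast_fire_of_pre_le hm, cast_fire_of_pre_le hm', hdelta]

theorem Step.of_removeTrans (h : (N.removeTrans t).Step m m') : N.Step m m' := by
  obtain ⟨u, ⟨⟨hu, -⟩, hen⟩, rfl⟩ := h
  exact ⟨u, ⟨hu, hen⟩, rfl⟩

theorem Step.removeTrans_of_duplicate (ht' : t' ∈ N.trans) (hne : t ≠ t')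
    (hdelta : N.delta t = N.delta t') (hpre : ∀ x, N.Pre t' x ≤ N.Pre t x)
    (h : N.Step m m') : (N.removeTrans t).Step m m' := by
  obtain ⟨u, ⟨hu, hen⟩, rfl⟩ := h
  by_cases hut : u = t
  · subst hut
    have hen' : ∀ x, N.Pre t' x ≤ m x := fun x => (hpre x).trans (hen x)
    exact ⟨t', ⟨⟨ht', hne.symm⟩, hen'⟩, fire_eq_of_delta_eq hdelta hen hen'⟩
  · exact ⟨u, ⟨⟨hu, hut⟩, hen⟩, rfl⟩

theorem removeTrans_step_eq_of_duplicate (ht' : t' ∈ N.trans) (hne : t ≠ t')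
    (hdelta : N.delta t = N.delta t') (hpre : ∀ x, N.Pre t' x ≤ N.Pre t x) :
    (N.removeTrans t).Step = N.Step := by
  ext m m'
  exact ⟨Step.of_removeTrans, Step.removeTrans_of_duplicate ht' hne hdelta hpre⟩

end PNet

theorem removeDuplicateTransition_reach_general {X T : Type} (N : PNet X T) (t t' : T)
    (ht' : t' ∈ N.trans) (hne : t ≠ t')
    (hdelta : ∀ p, (N.Post t p : ℤ) - (N.Pre t p : ℤ) = (N.Post t' p : ℤ) - (N.Pre t' p : ℤ))
    (hpre : ∀ p, N.Pre t' p ≤ N.Pre t p) :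
    N.R = (N.removeTrans t).R := by
  unfold PNet.R
  rw [PNet.removeTrans_step_eq_of_duplicate ht' hne (funext hdelta) hpre]
  rfl

/-- Removing a duplicate transition `t` of `t'`
(`Δ(t) = Δ(t')` and `Pre(t) ≥ Pre(t')`) does not change the reachability set. -/
theorem removeDuplicateTransition_reach {X T : Type} (N : PNet X T) (t t' : T)
    (ht : t ∈ N.trans) (ht' : t' ∈ N.trans) (hne : t ≠ t')
    (hdelta : ∀ p, (N.Post t p : ℤ) - (N.Pre t p : ℤ) = (N.Post t' p : ℤ) - (N.Pre t' p : ℤ))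
    (hpre : ∀ p, N.Pre t' p ≤ N.Pre t p) :
    N.R = (N.removeTrans t).R :=
  removeDuplicateTransition_reach_general N t t' ht' hne hdelta hpre
end

section
/- Let N = (P, T, Pre, Post, m₀) be a marked Petri net with loop-agglomerable places π₀, …, π_{n−1} ∈ P (n ≥ 1), let A = {π₀, …, π_{n−1}}, and let N' be their loop agglomeration with new place a. Then for every marking m : P ∖ A → ℕ and every m' : A → ℕ: the marking on P agreeing with m on P ∖ A and with m' on A belongs to R(N) if and only if the marking on (P ∖ A) ∪ {a} extending m with a ↦ Σ_{i<n} m'(πᵢ) belongs to R(N'). -/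
/-! The marking map `μ ↦ agglomMarking μ` (keep `μ` on `P ∖ A`, put its total over `A` on `a`)
sends steps of `N` to steps of the agglomerated net, since `Pre`, `Post` and `m₀` of that net are
the images of those of `N`. Conversely, the loop transitions move a token from any place of the
cycle to any other, so two markings that agree off `A` and have the same total on `A` are
mutually reachable. A step of the agglomerated net is therefore lifted by first redistributing
the tokens of `A` until the transition is enabled in `N`. -/

open Relation Finset

section Redistribution

variable {X : Type} [DecidableEq X]

theorem reflTransGen_of_sum_eq {r : (X → ℕ) → (X → ℕ) → Prop} (S : Finset X)
    (hmove : ∀ μ : X → ℕ, ∀ x ∈ S, ∀ y ∈ S, 1 ≤ μ x →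
      ReflTransGen r μ (μ - Pi.single x 1 + Pi.single y 1))
    {μ μ' : X → ℕ} (hoff : ∀ x ∉ S, μ x = μ' x) (hsum : ∑ x ∈ S, μ x = ∑ x ∈ S, μ' x) :
    ReflTransGen r μ μ' := by
  -- induction on the excess of `μ` over `μ'`, which one token move from a place with too many
  -- tokens to a place with too few strictly decreases
  induction hd : ∑ x ∈ S, (μ x - μ' x) using Nat.strong_induction_on generalizing μ with
  | _ d ih =>
  by_cases hle : ∀ x ∈ S, μ x ≤ μ' x
  · obtain rfl : μ = μ' := funext fun x =>
      if hx : x ∈ S then (sum_eq_sum_iff_of_le hle).1 hsum x hx else hoff x hx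
    exact ReflTransGen.refl
  push Not at hle
  obtain ⟨x, hxS, hx⟩ := hle
  obtain ⟨y, hyS, hy⟩ : ∃ y ∈ S, μ y < μ' y := by
    by_contra! h
    exact (sum_lt_sum h ⟨x, hxS, hx⟩).ne hsum.symm
  have hxy : x ≠ y := by rintro rfl; omega
  obtain ⟨ν, hmv, hνx, hνy, hνz⟩ : ∃ ν, ReflTransGen r μ ν ∧ ν x = μ x - 1 ∧ ν y = μ y + 1 ∧
      ∀ z, z ≠ x → z ≠ y → ν z = μ z :=
    ⟨_, hmove μ x hxS y hyS (by omega), by simp [hxy], by simp [hxy.symm],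
      fun z hzx hzy => by simp [hzx, hzy]⟩
  have hνsum : ∑ z ∈ S, ν z + 1 = ∑ z ∈ S, μ z + 1 := by
    have hpt : ν + Pi.single x 1 = μ + Pi.single y 1 := by
      funext z
      by_cases hzx : z = x
      · subst hzx; simp [hνx, hxy]; omega
      by_cases hzy : z = y
      · subst hzy; simp [hνy, hzx]
      simp [hνz z hzx hzy, hzx, hzy]
    have := congrArg (fun f => ∑ z ∈ S, f z) hpt
    simpa [sum_add_distrib, sum_pi_single', hxS, hyS] using this
  refine hmv.trans (ih _ ?_ ?_ (by omega) rfl)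
  · rw [← hd]
    refine sum_lt_sum (fun z _ => ?_) ⟨x, hxS, by omega⟩
    by_cases hzx : z = x
    · subst hzx; omega
    by_cases hzy : z = y
    · subst hzy; omega
    rw [hνz z hzx hzy]
  · intro z hz
    rw [hνz z (fun h => hz (h ▸ hxS)) (fun h => hz (h ▸ hyS)), hoff z hz]

end Redistribution

theorem add_mem_valuationOn {X : Type} {V : Set X} {f g : X → ℕ} (hf : f ∈ ValuationOn V)
    (hg : g ∈ ValuationOn V) : f + g ∈ ValuationOn V :=
  fun x hx => by simp [hf x hx, hg x hx]

theorem tsub_mem_valuationOn {X : Type} {V : Set X} {f : X → ℕ} (hf : f ∈ ValuationOn V)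
    (g : X → ℕ) : f - g ∈ ValuationOn V :=
  fun x hx => by simp [hf x hx]

theorem valuationOn_mono {X : Type} {V W : Set X} (h : V ⊆ W) : ValuationOn V ⊆ ValuationOn W :=
  fun _ hf x hx => hf x fun hxV => hx (h hxV)

theorem eq_single_of_apply_eq_of_forall_ne {X : Type} [DecidableEq X] {f : X → ℕ} {p : X}
    {v : ℕ} (hp : f p = v) (hne : ∀ r, r ≠ p → f r = 0) : f = Pi.single p v :=
  funext fun r => by by_cases hr : r = p <;> simp_all

namespace PNet

variable {X T : Type}

theorem fire_eq (N : PNet X T) (t : T) (m : X → ℕ) : N.fire t m = m - N.Pre t + N.Post t :=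
  rfl

section Loops

variable [DecidableEq X] (N : PNet X T)

def MovesToken (t : T) (p q : X) : Prop :=
  t ∈ N.trans ∧ N.Pre t = Pi.single p 1 ∧ N.Post t = Pi.single q 1

theorem MovesToken.step {N : PNet X T} {t : T} {p q : X} (h : N.MovesToken t p q)
    {μ : X → ℕ} (hμ : 1 ≤ μ p) : N.Step μ (μ - Pi.single p 1 + Pi.single q 1) := by
  refine ⟨t, ⟨h.1, fun x => ?_⟩, by rw [fire_eq, h.2.1, h.2.2]⟩
  rw [h.2.1, Pi.single_apply]
  split_ifs with hx
  · exact hx ▸ hμ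
  · exact Nat.zero_le _

open Fin.NatCast in
theorem reflTransGen_move_of_cycle {n : ℕ} [NeZero n] {π : Fin n → X}
    (hcyc : ∀ i, ∃ t, N.MovesToken t (π i) (π (i + 1))) (μ : X → ℕ) (i j : Fin n)
    (hμ : 1 ≤ μ (π i)) :
    ReflTransGen N.Step μ (μ - Pi.single (π i) 1 + Pi.single (π j) 1) := by
  suffices ∀ k : ℕ,
      ReflTransGen N.Step μ (μ - Pi.single (π i) 1 + Pi.single (π (i + (k : Fin n))) 1) by
    simpa using this (j - i).val
  intro k
  induction k with
  | zero =>
    have hle : Pi.single (π i) 1 ≤ μ := fun x => by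
      rw [Pi.single_apply]; split_ifs with hx <;> simp_all
    simpa [tsub_add_cancel_of_le hle] using ReflTransGen.refl
  | succ k ih =>
    obtain ⟨t, ht⟩ := hcyc (i + (k : Fin n))
    have hstep :=
      ht.step (μ := μ - Pi.single (π i) 1 + Pi.single (π (i + (k : Fin n))) 1) (by simp)
    rw [add_tsub_cancel_right] at hstep
    exact ih.tail (by simpa [add_assoc] using hstep)

def Redistributes (A : Finset X) : Prop :=
  ∀ ⦃μ μ' : X → ℕ⦄, (∀ x ∉ A, μ x = μ' x) → ∑ x ∈ A, μ x = ∑ x ∈ A, μ' x →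
    ReflTransGen N.Step μ μ'

theorem redistributes_image_of_cycle {n : ℕ} [NeZero n] {π : Fin n → X}
    (hcyc : ∀ i, ∃ t, N.MovesToken t (π i) (π (i + 1))) : N.Redistributes (univ.image π) :=
  fun _ _ => reflTransGen_of_sum_eq _ <| by
    simp only [mem_image, mem_univ, true_and, forall_exists_index, forall_apply_eq_imp_iff]
    exact fun μ i j => N.reflTransGen_move_of_cycle hcyc μ i j

end Loops

section Agglomeration

variable [DecidableEq X] (N : PNet X T) (A : Finset X) (a : X)

noncomputable def agglomMarking (μ : X → ℕ) : X → ℕ :=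
  Function.update (restrictTo (N.places \ ↑A) μ) a (∑ x ∈ A, μ x)

theorem agglom_Pre (u : T) : (N.agglom A a).Pre u = N.agglomMarking A a (N.Pre u) := rfl

theorem agglom_Post (u : T) : (N.agglom A a).Post u = N.agglomMarking A a (N.Post u) := rfl

theorem agglomMarking_add (μ ν : X → ℕ) :
    N.agglomMarking A a (μ + ν) = N.agglomMarking A a μ + N.agglomMarking A a ν := by
  rw [agglomMarking, agglomMarking, agglomMarking, ← Function.update_add]
  simp [restrictTo, Set.indicator_add', sum_add_distrib]

theorem agglomMarking_mono : Monotone (N.agglomMarking A a) := fun μ ν h x => by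
  by_cases hx : x = a
  · subst hx; simpa [agglomMarking] using sum_le_sum fun y _ => h y
  · simpa [agglomMarking, hx, restrictTo] using Set.indicator_le_indicator (h x)

theorem agglomMarking_tsub {μ ν : X → ℕ} (h : ν ≤ μ) :
    N.agglomMarking A a (μ - ν) = N.agglomMarking A a μ - N.agglomMarking A a ν := by
  funext x
  have := congrFun (N.agglomMarking_add A a (μ - ν) ν) x
  rw [tsub_add_cancel_of_le h] at this
  simp only [this, Pi.add_apply, Pi.sub_apply, add_tsub_cancel_right]

theorem agglom_step {μ ν : X → ℕ} (h : N.Step μ ν) :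
    (N.agglom A a).Step (N.agglomMarking A a μ) (N.agglomMarking A a ν) := by
  obtain ⟨t, ⟨ht, hle⟩, rfl⟩ := h
  refine ⟨t, ⟨ht, N.agglomMarking_mono A a hle⟩, ?_⟩
  rw [fire_eq, fire_eq, agglom_Pre, agglom_Post, agglomMarking_add, agglomMarking_tsub _ _ _ hle]

theorem agglomMarking_mem_R {μ : X → ℕ} (h : μ ∈ N.R) :
    N.agglomMarking A a μ ∈ (N.agglom A a).R :=
  ReflTransGen.lift (N.agglomMarking A a) (fun _ _ => N.agglom_step A a) _ _ h

theorem agglomMarking_mem_valuationOn (μ : X → ℕ) :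
    N.agglomMarking A a μ ∈ ValuationOn (N.places \ ↑A ∪ {a}) := fun x hx => by
  simp only [Set.mem_union, Set.mem_singleton_iff, not_or] at hx
  simp [agglomMarking, hx.2, restrictTo, Set.indicator_of_notMem hx.1]

variable {N A a}

theorem exists_valuationOn_agglomMarking_eq (hA : ↑A ⊆ N.places) (ha : a ∉ N.places)
    {x₀ : X} (hx₀ : x₀ ∈ A) {ν : X → ℕ} (hν : ν ∈ ValuationOn (N.places \ ↑A ∪ {a})) :
    ∃ μ ∈ ValuationOn N.places, N.agglomMarking A a μ = ν := by
  refine ⟨restrictTo (N.places \ ↑A) ν + Pi.single x₀ (ν a), fun x hx => ?_, funext fun x => ?_⟩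
  · have hx₀x : x ≠ x₀ := fun h => hx (h ▸ hA hx₀)
    simp [restrictTo, hx₀x, Set.indicator_of_notMem (fun h : x ∈ N.places \ ↑A => hx h.1)]
  by_cases hxa : x = a
  · subst hxa
    have hzero : ∑ y ∈ A, restrictTo (N.places \ ↑A) ν y = 0 :=
      sum_eq_zero fun y hy => Set.indicator_of_notMem (fun h => h.2 hy) _
    simp [agglomMarking, sum_add_distrib, hzero, sum_pi_single', hx₀]
  · simp only [agglomMarking, Function.update_of_ne hxa, restrictTo]
    by_cases hx : x ∈ N.places \ ↑A
    · have hx₀x : x ≠ x₀ := fun h => hx.2 (h ▸ hx₀)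
      simp [hx, hx₀x]
    · simp [hx, hν x (by simp [hx, hxa])]

theorem exists_le_of_agglomMarking_le (hA : ↑A ⊆ N.places) (ha : a ∉ N.places)
    (hne : A.Nonempty) {μ ν : X → ℕ} (hν : ν ∈ ValuationOn N.places)
    (h : N.agglomMarking A a ν ≤ N.agglomMarking A a μ) :
    ∃ μ₁ ∈ ValuationOn N.places, ν ≤ μ₁ ∧ N.agglomMarking A a μ₁ = N.agglomMarking A a μ := by
  obtain ⟨ρ, hρ, hρeq⟩ := exists_valuationOn_agglomMarking_eq hA ha hne.choose_spec
    (tsub_mem_valuationOn (N.agglomMarking_mem_valuationOn A a μ) (N.agglomMarking A a ν))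
  refine ⟨ν + ρ, add_mem_valuationOn hν hρ, fun x => Nat.le_add_right _ _, ?_⟩
  rw [agglomMarking_add, hρeq, add_tsub_cancel_of_le h]

theorem Redistributes.reflTransGen_of_agglomMarking_eq (hred : N.Redistributes A)
    (ha : a ∉ N.places) {μ μ' : X → ℕ} (hμ : μ ∈ ValuationOn N.places)
    (hμ' : μ' ∈ ValuationOn N.places) (h : N.agglomMarking A a μ = N.agglomMarking A a μ') :
    ReflTransGen N.Step μ μ' := by
  refine hred (fun x hxA => ?_) (by simpa [agglomMarking] using congrFun h a)
  by_cases hxP : x ∈ N.places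
  · have hxa : x ≠ a := fun hxa => ha (hxa ▸ hxP)
    have hx : x ∈ N.places \ ↑A := ⟨hxP, hxA⟩
    simpa [agglomMarking, hxa, restrictTo, hx] using congrFun h x
  · rw [hμ x hxP, hμ' x hxP]

theorem exists_mem_R_of_mem_agglom_R (hwf : N.WF) (hA : ↑A ⊆ N.places) (ha : a ∉ N.places)
    (hne : A.Nonempty) (hred : N.Redistributes A) {ν : X → ℕ} (hν : ν ∈ (N.agglom A a).R) :
    ∃ μ ∈ N.R, μ ∈ ValuationOn N.places ∧ N.agglomMarking A a μ = ν := by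
  induction hν with
  | refl => exact ⟨N.m0, ReflTransGen.refl, hwf.2.2.1, rfl⟩
  | tail _ hstep ih =>
    obtain ⟨μ, hμR, hμP, rfl⟩ := ih
    obtain ⟨u, ⟨hu, hle⟩, rfl⟩ := hstep
    have hPre : N.Pre u ∈ ValuationOn N.places := fun x hx => (hwf.2.2.2 u hu x hx).1
    have hPost : N.Post u ∈ ValuationOn N.places := fun x hx => (hwf.2.2.2 u hu x hx).2
    obtain ⟨μ₁, hμ₁P, hPreμ₁, hμ₁⟩ := exists_le_of_agglomMarking_le hA ha hne hPre hle
    have hμμ₁ := hred.reflTransGen_of_agglomMarking_eq ha hμP hμ₁P hμ₁.symm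
    refine ⟨N.fire u μ₁, (hμR.trans hμμ₁).tail ⟨u, ⟨hu, hPreμ₁⟩, rfl⟩, ?_, ?_⟩
    · exact add_mem_valuationOn (tsub_mem_valuationOn hμ₁P _) hPost
    · rw [fire_eq, fire_eq, agglomMarking_add, agglomMarking_tsub _ _ _ hPreμ₁, hμ₁, agglom_Pre,
        agglom_Post]

theorem mem_R_of_agglomMarking_mem_R (hwf : N.WF) (hA : ↑A ⊆ N.places) (ha : a ∉ N.places)
    (hne : A.Nonempty) (hred : N.Redistributes A) {μ : X → ℕ} (hμ : μ ∈ ValuationOn N.places)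
    (h : N.agglomMarking A a μ ∈ (N.agglom A a).R) : μ ∈ N.R := by
  obtain ⟨μ₀, hμ₀R, hμ₀P, hμ₀⟩ := exists_mem_R_of_mem_agglom_R hwf hA ha hne hred h
  exact hμ₀R.trans (hred.reflTransGen_of_agglomMarking_eq ha hμ₀P hμ hμ₀)

theorem agglomMarking_add_eq_update {m m' : X → ℕ} (hm : m ∈ ValuationOn (N.places \ ↑A))
    (hm' : m' ∈ ValuationOn ↑A) :
    N.agglomMarking A a (m + m') = Function.update m a (∑ x ∈ A, m' x) := by
  funext x
  by_cases hxa : x = a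
  · subst hxa
    have hmA : ∀ y ∈ A, m y = 0 := fun y hy => hm y fun h => h.2 hy
    simp [agglomMarking, sum_add_distrib, sum_eq_zero hmA]
  · by_cases hx : x ∈ N.places \ ↑A
    · simp [agglomMarking, hxa, restrictTo, hx, hm' x hx.2]
    · simp [agglomMarking, hxa, restrictTo, hx, hm x hx]

end Agglomeration

end PNet

/-- Loop agglomeration of the places `π₀, …, π_{n-1}` (pairwise
distinct, `n ≥ 1`) as the fresh place `a`: for every marking `m` on `P ∖ A` and every
marking `m'` on `A` (where `A = {π₀, …, π_{n-1}}`), the combined marking `m + m'` is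
reachable in `N` iff the marking extending `m` with `a ↦ Σ_{i<n} m'(πᵢ)` is reachable
in the agglomerated net `N'`. -/
theorem loopAgglomeration_reach_iff {X T : Type} [DecidableEq X] (N : PNet X T)
    (hwf : N.WF) (n : ℕ) (hn : 1 ≤ n) (π : Fin n → X) (hinj : Function.Injective π)
    (hπP : ∀ i, π i ∈ N.places)
    (hloop : ∀ i : Fin n, ∃ t ∈ N.trans,
        N.Pre t (π i) = 1 ∧ (∀ r, r ≠ π i → N.Pre t r = 0) ∧
        N.Post t (π ⟨(i.val + 1) % n, Nat.mod_lt _ (by omega)⟩) = 1 ∧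
        (∀ r, r ≠ π ⟨(i.val + 1) % n, Nat.mod_lt _ (by omega)⟩ → N.Post t r = 0))
    (A : Finset X) (hA : A = Finset.univ.image π)
    (a : X) (ha : a ∉ N.places)
    (m : X → ℕ) (hm : m ∈ ValuationOn (N.places \ ↑A))
    (m' : X → ℕ) (hm' : m' ∈ ValuationOn ↑A) :
    (fun x => m x + m' x) ∈ N.R ↔
      Function.update m a (∑ i : Fin n, m' (π i)) ∈ (N.agglom A a).R := by
  have : NeZero n := ⟨by omega⟩
  have hcyc : ∀ i : Fin n, ∃ t, N.MovesToken t (π i) (π (i + 1)) := fun i => by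
    obtain ⟨t, ht, hpre, hpre0, hpost, hpost0⟩ := hloop i
    have hsucc : (⟨(i.val + 1) % n, Nat.mod_lt _ (by omega)⟩ : Fin n) = i + 1 := by
      ext; simp [Fin.val_add]
    rw [hsucc] at hpost hpost0
    exact ⟨t, ht, eq_single_of_apply_eq_of_forall_ne hpre hpre0,
      eq_single_of_apply_eq_of_forall_ne hpost hpost0⟩
  subst hA
  have hAP : ↑(univ.image π) ⊆ N.places := by simpa [Set.subset_def] using hπP
  have hmm' : m + m' ∈ ValuationOn N.places :=
    add_mem_valuationOn (valuationOn_mono Set.sdiff_subset hm) (valuationOn_mono hAP hm')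
  rw [← sum_image fun i _ j _ h => hinj h, ← PNet.agglomMarking_add_eq_update hm hm']
  exact ⟨N.agglomMarking_mem_R _ a, PNet.mem_R_of_agglomMarking_mem_R hwf hAP ha
    (univ_nonempty.image π) (N.redistributes_image_of_cycle hcyc) hmm'⟩
end

section
/- Let (N₁, (W, S), N₂) be a net-abstraction, let p be a redundant place of N₂ with witnesses I ⊆ P₂ ∖ {p}, v : I ∪ {p} → ℕ ∖ {0} and b ∈ ℕ, and let N₃ be obtained from N₂ by removing p. Let W' = W ∪ I ∪ {p} and let S' be the set of valuations e : W' → ℕ such that the restriction of e to W lies in S and v(p)·e(p) = Σ_{q∈I} v(q)·e(q) + b. Then (N₁, (W', S'), N₃) is a net-abstraction. -/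
/-! The weighted marking equation `v(p)·m(p) = Σ_{q ∈ I} v(q)·m(q) + b` holds at `m₀` by (1) and
is preserved by every firing by (3), so it holds on all of `R(N₂)`. Conversely, on a reachable
marking of `N₂` condition (2) together with this equation shows that `p` always carries enough
tokens for any transition enabled on the other places; hence the runs of `N₃` lift to runs of
`N₂`. Since `v(p) > 0`, the equation determines the value at `p`, so `R(N₂)` consists exactly of
the valuations on `P₂` whose restriction to `P₂ ∖ {p}` lies in `R(N₃)` and which satisfy the
equation. Moving the equation into the constraint system therefore leaves the abstraction
unchanged. -/

section RestrictTo

variable {X : Type}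

theorem restrictTo_of_mem {V : Set X} {x : X} (hx : x ∈ V) (f : X → ℕ) :
    restrictTo V f x = f x :=
  Set.indicator_of_mem hx f

theorem restrictTo_of_notMem {V : Set X} {x : X} (hx : x ∉ V) (f : X → ℕ) :
    restrictTo V f x = 0 :=
  Set.indicator_of_notMem hx f

theorem restrictTo_mem_valuationOn (V : Set X) (f : X → ℕ) : restrictTo V f ∈ ValuationOn V :=
  fun _ hx => restrictTo_of_notMem hx f

theorem restrictTo_restrictTo {A B : Set X} (hAB : A ⊆ B) (f : X → ℕ) :
    restrictTo A (restrictTo B f) = restrictTo A f := by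
  simp only [restrictTo, Set.indicator_indicator, Set.inter_eq_left.mpr hAB]

theorem sum_mul_restrictTo {V : Set X} {I : Finset X} (hI : ↑I ⊆ V) (w f : X → ℕ) :
    ∑ q ∈ I, w q * restrictTo V f q = ∑ q ∈ I, w q * f q :=
  Finset.sum_congr rfl fun q hq => by rw [restrictTo_of_mem (hI hq)]

end RestrictTo

namespace PNet

variable {X T : Type} {N : PNet X T}

theorem WF.R_subset_valuationOn (hwf : N.WF) : N.R ⊆ ValuationOn N.places := by
  intro m hm
  induction hm with
  | refl => exact hwf.2.2.1
  | tail _ hstep ih =>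
    obtain ⟨t, ⟨ht, -⟩, rfl⟩ := hstep
    intro x hx
    simp [fire, ih x hx, hwf.2.2.2 t ht x hx]

theorem cast_fire_of_enabled {t : T} {m : X → ℕ} (h : N.Enabled t m) (x : X) :
    (N.fire t m x : ℤ) = m x + N.delta t x := by
  have := h.2 x
  simp only [fire, delta]
  omega

theorem removePlace_places (p : X) : (N.removePlace p).places = N.places \ {p} := rfl

theorem removePlace_fire_restrictTo (p : X) (t : T) (m : X → ℕ) :
    (N.removePlace p).fire t (restrictTo (N.places \ {p}) m)
      = restrictTo (N.places \ {p}) (N.fire t m) := by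
  funext x
  by_cases hx : x ∈ N.places \ {p}
  · simp [removePlace, fire, restrictTo_of_mem hx]
  · simp [removePlace, fire, restrictTo_of_notMem hx]

theorem Step.restrictTo_removePlace (p : X) {m m' : X → ℕ} (h : N.Step m m') :
    (N.removePlace p).Step (restrictTo (N.places \ {p}) m) (restrictTo (N.places \ {p}) m') := by
  obtain ⟨t, ⟨ht, hle⟩, rfl⟩ := h
  exact ⟨t, ⟨ht, fun x => Set.indicator_le_indicator (hle x)⟩,
    (removePlace_fire_restrictTo p t m).symm⟩

theorem restrictTo_mem_R_removePlace (p : X) {m : X → ℕ} (hm : m ∈ N.R) :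
    restrictTo (N.places \ {p}) m ∈ (N.removePlace p).R :=
  Relation.ReflTransGen.lift (restrictTo (N.places \ {p})) (fun _ _ h => h.restrictTo_removePlace p)
    _ _ hm

namespace RedundantPlace

variable {p : X} {I : Finset X} {v : X → ℕ} {b : ℕ}

theorem invariant (hred : N.RedundantPlace p I v b) {m : X → ℕ} (hm : m ∈ N.R) :
    v p * m p = ∑ q ∈ I, v q * m q + b := by
  obtain ⟨-, -, -, -, hb, -, hdelta⟩ := hred
  induction hm with
  | refl => zify; linarith
  | tail _ hstep ih =>
    obtain ⟨t, hen, rfl⟩ := hstep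
    zify at ih ⊢
    simp only [cast_fire_of_enabled hen, delta, mul_add, Finset.sum_add_distrib]
    linarith [hdelta t hen.1]

theorem enabled_of_enabled_removePlace (hwf : N.WF) (hred : N.RedundantPlace p I v b)
    {t : T} {m : X → ℕ} (hm : m ∈ N.R)
    (hen : (N.removePlace p).Enabled t (restrictTo (N.places \ {p}) m)) : N.Enabled t m := by
  have hinv := hred.invariant hm
  obtain ⟨-, hI, hvp, -, -, hpre, -⟩ := hred
  obtain ⟨ht, hle⟩ := hen
  have hrest : ∀ x ∈ N.places \ {p}, N.Pre t x ≤ m x := fun x hx => by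
    simpa [removePlace, restrictTo_of_mem hx] using hle x
  have hp : (v p : ℤ) * N.Pre t p ≤ v p * m p :=
    calc (v p : ℤ) * N.Pre t p ≤ ∑ q ∈ I, (v q : ℤ) * N.Pre t q + b := by
          linarith [hpre t ht]
      _ ≤ ∑ q ∈ I, (v q : ℤ) * m q + b := by
          gcongr with q hq
          exact_mod_cast hrest q (hI hq)
      _ = v p * m p := by exact_mod_cast hinv.symm
  refine ⟨ht, fun x => ?_⟩
  by_cases hx : x ∈ N.places
  · by_cases hxp : x = p
    · subst hxp
      exact_mod_cast le_of_mul_le_mul_left hp (by positivity)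
    · exact hrest x ⟨hx, hxp⟩
  · simp [hwf.2.2.2 t ht x hx]

theorem exists_mem_R_of_mem_R_removePlace (hwf : N.WF) (hred : N.RedundantPlace p I v b)
    {m : X → ℕ} (hm : m ∈ (N.removePlace p).R) :
    ∃ m' ∈ N.R, restrictTo (N.places \ {p}) m' = m := by
  induction hm with
  | refl => exact ⟨N.m0, Relation.ReflTransGen.refl, rfl⟩
  | tail _ hstep ih =>
    obtain ⟨t, hen, rfl⟩ := hstep
    obtain ⟨m', hm', rfl⟩ := ih
    exact ⟨N.fire t m', hm'.tail ⟨t, hred.enabled_of_enabled_removePlace hwf hm' hen, rfl⟩,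
      (removePlace_fire_restrictTo p t m').symm⟩

theorem restrictTo_mem_R_iff (hwf : N.WF) (hred : N.RedundantPlace p I v b) (f : X → ℕ) :
    restrictTo N.places f ∈ N.R ↔
      restrictTo (N.places \ {p}) f ∈ (N.removePlace p).R ∧
        v p * f p = ∑ q ∈ I, v q * f q + b := by
  have hI : ↑I ⊆ N.places \ {p} := hred.2.1
  constructor
  · intro h
    refine ⟨?_, ?_⟩
    · simpa [restrictTo_restrictTo Set.sdiff_subset] using restrictTo_mem_R_removePlace p h
    · simpa [restrictTo_of_mem hred.1, sum_mul_restrictTo (hI.trans Set.sdiff_subset)]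
        using hred.invariant h
  · rintro ⟨h, heq⟩
    obtain ⟨m, hm, hres⟩ := hred.exists_mem_R_of_mem_R_removePlace hwf h
    suffices m = restrictTo N.places f from this ▸ hm
    funext x
    by_cases hx : x ∈ N.places
    · rw [restrictTo_of_mem hx]
      by_cases hxp : x = p
      · subst hxp
        have hsum : ∑ q ∈ I, v q * m q = ∑ q ∈ I, v q * f q := by
          rw [← sum_mul_restrictTo hI, hres, sum_mul_restrictTo hI]
        refine Nat.eq_of_mul_eq_mul_left (Nat.pos_of_ne_zero hred.2.2.1) ?_
        rw [hred.invariant hm, hsum, heq]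
      · simpa [restrictTo_of_mem (show x ∈ N.places \ {p} from ⟨hx, hxp⟩)]
          using congrFun hres x
    · rw [restrictTo_of_notMem hx, hwf.R_subset_valuationOn hm x hx]

end RedundantPlace

end PNet

theorem netAbstraction_removeRedundantPlace_general {X T₁ T₂ : Type}
    (N₁ : PNet X T₁) (N₂ : PNet X T₂) (hwf₂ : N₂.WF)
    (W : Set X) (S : Set (X → ℕ))
    (habs : NetAbstraction N₁ W S N₂)
    (p : X) (I : Finset X) (v : X → ℕ) (b : ℕ) (hred : N₂.RedundantPlace p I v b) :
    NetAbstraction N₁ (W ∪ ↑I ∪ {p})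
      {e | e ∈ ValuationOn (W ∪ ↑I ∪ {p}) ∧ restrictTo W e ∈ S ∧
            v p * e p = (∑ q ∈ I, v q * e q) + b}
      (N₂.removePlace p) := by
  have hI : ↑I ⊆ N₂.places \ {p} := hred.2.1
  have hV : W ∪ ↑I ∪ {p} ∪ N₁.places ∪ (N₂.removePlace p).places
      = W ∪ N₁.places ∪ N₂.places := by
    ext x
    have hxI : x ∈ I → x ∈ N₂.places := fun hx => (hI hx).1
    have hxp : x = p → x ∈ N₂.places := fun hx => hx ▸ hred.1
    simp only [PNet.removePlace_places, Set.mem_union, Set.mem_sdiff, Set.mem_singleton_iff,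
      Finset.mem_coe]
    tauto
  have hIW : ↑I ⊆ W ∪ ↑I ∪ {p} := Set.subset_union_right.trans Set.subset_union_left
  rw [NetAbstraction, hV, habs]
  congr 1
  ext f
  simp only [liftTo, Set.mem_inter_iff, Set.mem_ofPred_eq, PNet.removePlace_places,
    hred.restrictTo_mem_R_iff hwf₂, restrictTo_mem_valuationOn,
    restrictTo_restrictTo (Set.subset_union_left.trans Set.subset_union_left),
    restrictTo_of_mem (show p ∈ W ∪ ↑I ∪ {p} from Or.inr rfl), sum_mul_restrictTo hIW]
  tauto

/-- Net-abstractions are preserved by removal of a redundant place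
`p` of `N₂` (witnessed by `I`, `v`, `b`), the constraint system being extended with the
variables `I ∪ {p}` and the marking equation `v(p)·p = Σ_{q ∈ I} v(q)·q + b`. -/
theorem netAbstraction_removeRedundantPlace {X T₁ T₂ : Type} [Countable X] [DecidableEq X]
    (N₁ : PNet X T₁) (N₂ : PNet X T₂) (hwf₁ : N₁.WF) (hwf₂ : N₂.WF)
    (W : Set X) (hW : W.Finite) (S : Set (X → ℕ)) (hS : S ⊆ ValuationOn W)
    (habs : NetAbstraction N₁ W S N₂)
    (p : X) (I : Finset X) (v : X → ℕ) (b : ℕ) (hred : N₂.RedundantPlace p I v b) :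
    NetAbstraction N₁ (W ∪ ↑I ∪ {p})
      {e | e ∈ ValuationOn (W ∪ ↑I ∪ {p}) ∧ restrictTo W e ∈ S ∧
            v p * e p = (∑ q ∈ I, v q * e q) + b}
      (N₂.removePlace p) :=
  netAbstraction_removeRedundantPlace_general N₁ N₂ hwf₂ W S habs p I v b hred
end
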